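/- (Deterministic form of Lemma 3.3(ii)) Let α_A^high > 0. For every α_P > 0, the supremum of F(a, z, -R_P(1-z)², δ, α_P, α_A^high) over all deterministic actions a, z ∈ ℝ and δ ∈ ℝ equals G(a*, z*, α_A^high); in particular this supremum does not depend on α_P and it is attained at a = a*, z = z*. -/

import Mathlib

open MeasureTheory

/-- The objective `F(a,z,γ,δ,α_P,α_A)` from the first-best problem. -/
noncomputable def Fobj (R_A R_P ρ T : ℝ) (k a : ℝ → ℝ) (z γ δ αP αA : ℝ) : ℝ :=
  -Real.exp (R_P * (δ - (1 - z) * (∫ s in (0:ℝ)..T, a s)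
      + (R_P * (1 - z) ^ 2 / 2 + γ / 2) * αP * T))
  - ρ * Real.exp (R_A * ((∫ s in (0:ℝ)..T, k (a s))
      - z * (∫ s in (0:ℝ)..T, a s) - δ + (R_A * z ^ 2 / 2 - γ / 2) * αA * T))

/-- The quantity `G(a,z,γ,α_P,α_A)`. -/
noncomputable def Gobj (R_A R_P ρ T : ℝ) (k a : ℝ → ℝ) (z γ αP αA : ℝ) : ℝ :=
  -(ρ ^ (R_P / (R_A + R_P)) * ((R_A + R_P) / R_P)
      * (R_A / R_P) ^ (-(R_A / (R_A + R_P)))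
      * Real.exp ((R_A * R_P / (R_A + R_P)) * ((∫ s in (0:ℝ)..T, (k (a s) - a s))
          + γ / 2 * T * (αP - αA)
          + T / 2 * (αP * R_P * (1 - z) ^ 2 + αA * R_A * z ^ 2))))

/-- A deterministic action: a measurable map `[0,T] → [0, a_max]`. -/
def IsAction (T aMax : ℝ) (a : ℝ → ℝ) : Prop :=
  Measurable a ∧ ∀ s ∈ Set.Icc (0 : ℝ) T, a s ∈ Set.Icc (0 : ℝ) aMax

/-!
For fixed `a` and `z` the objective is `-(exp (R_P (δ + u)) + ρ exp (R_A (v - δ)))`; its supremum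
over `δ` is reached where the two exponentials balance (`R_P e^{R_P(δ+u)} = R_A ρ e^{R_A(v-δ)}`)
and equals `G(a, z, γ, α_P, α_A)`. At `γ = -R_P (1-z)²` the `α_P`-terms of `G` cancel, leaving a
decreasing function of `∫ (k ∘ a - a) + (α_A T / 2)(R_P (1-z)² + R_A z²)`. The integral is minimised
by the constant action `a*` pointwise, and the quadratic by `z*`, by completing the square.
-/

open Real Set

theorem isLeast_range_exp_add_mul_exp_neg {p q c : ℝ} (hp : 0 < p) (hq : 0 < q) (hc : 0 < c) :
    IsLeast (range fun t => exp (p * t) + c * exp (-(q * t)))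
      (c ^ (p / (q + p)) * ((q + p) / p) * (q / p) ^ (-(q / (q + p)))) := by
  have hqp : 0 < q + p := by linarith
  obtain ⟨t₀, ht₀⟩ : ∃ t₀, (q + p) * t₀ = log (q * c / p) := ⟨_, mul_div_cancel₀ _ hqp.ne'⟩
  -- first-order condition at the minimiser `t₀`
  have hbalance : q * (c * exp (-(q * t₀))) = p * exp (p * t₀) := by
    have h : exp (p * t₀) * exp (q * t₀) = q * c / p := by
      rw [← exp_add, ← exp_log (show 0 < q * c / p by positivity), ← ht₀]
      ring_nf
    rw [exp_neg, ← div_eq_mul_inv, mul_div_assoc', div_eq_iff (exp_pos _).ne', mul_assoc, h]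
    field_simp
  have hvalue : exp (p * t₀) + c * exp (-(q * t₀))
      = c ^ (p / (q + p)) * ((q + p) / p) * (q / p) ^ (-(q / (q + p))) := by
    have hexp₀ : exp (p * t₀) = (q * c / p) ^ (p / (q + p)) := by
      rw [rpow_def_of_pos (by positivity), ← ht₀]
      field_simp
    have hsplit : (q / p) ^ (p / (q + p)) = q / p * (q / p) ^ (-(q / (q + p))) := by
      rw [show p / (q + p) = 1 + -(q / (q + p)) by field_simp; ring, rpow_add (by positivity),
        rpow_one]
    calc exp (p * t₀) + c * exp (-(q * t₀)) = (q + p) / q * exp (p * t₀) := by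
          rw [div_mul_eq_mul_div, eq_div_iff hq.ne']
          linear_combination hbalance
      _ = _ := by
          rw [hexp₀, mul_div_right_comm, mul_rpow (by positivity) hc.le, hsplit]
          field_simp
  refine ⟨⟨t₀, hvalue⟩, ?_⟩
  rintro _ ⟨t, rfl⟩
  rw [← hvalue]
  have hsplit₁ : exp (p * t) = exp (p * t₀) * exp (p * (t - t₀)) := by
    rw [← exp_add]; ring_nf
  have hsplit₂ : c * exp (-(q * t)) = c * exp (-(q * t₀)) * exp (-(q * (t - t₀))) := by
    rw [mul_assoc, ← exp_add]; ring_nf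
  -- tangent lines of the two exponentials at `t₀`; their slopes cancel by `hbalance`
  calc exp (p * t₀) + c * exp (-(q * t₀))
      = exp (p * t₀) * (p * (t - t₀) + 1) + c * exp (-(q * t₀)) * (-(q * (t - t₀)) + 1) := by
        linear_combination (t - t₀) * hbalance
    _ ≤ exp (p * t₀) * exp (p * (t - t₀)) + c * exp (-(q * t₀)) * exp (-(q * (t - t₀))) := by
        gcongr <;> exact add_one_le_exp _
    _ = exp (p * t) + c * exp (-(q * t)) := by rw [hsplit₁, hsplit₂]

theorem isLeast_range_exp_add_mul_exp {p q c : ℝ} (hp : 0 < p) (hq : 0 < q) (hc : 0 < c)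
    (u v : ℝ) :
    IsLeast (range fun δ => exp (p * (δ + u)) + c * exp (q * (v - δ)))
      (c ^ (p / (q + p)) * ((q + p) / p) * (q / p) ^ (-(q / (q + p)))
        * exp (q * p / (q + p) * (u + v))) := by
  obtain ⟨w, hw⟩ : ∃ w, (q + p) * w = q * (u + v) :=
    ⟨_, mul_div_cancel₀ _ (add_pos hq hp).ne'⟩
  have hpw : q * p / (q + p) * (u + v) = p * w := by
    rw [div_mul_eq_mul_div, div_eq_iff (add_pos hq hp).ne']
    linear_combination (-p) * hw
  have hshift : ∀ δ, exp (p * (δ + u)) + c * exp (q * (v - δ))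
      = (exp (p * (δ + u - w)) + c * exp (-(q * (δ + u - w)))) * exp (p * w) := by
    intro δ
    rw [add_mul, mul_assoc, ← exp_add, ← exp_add]
    congr 3
    · ring
    · linear_combination (-1) * hw
  obtain ⟨⟨t₀, ht₀⟩, hle⟩ := isLeast_range_exp_add_mul_exp_neg hp hq hc
  rw [hpw]
  refine ⟨⟨t₀ - u + w, ?_⟩, ?_⟩
  · dsimp only at ht₀ ⊢
    rw [hshift, show t₀ - u + w + u - w = t₀ by ring, ht₀]
  · rintro _ ⟨δ, rfl⟩
    dsimp only
    rw [hshift]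
    exact mul_le_mul_of_nonneg_right (hle ⟨_, rfl⟩) (exp_pos _).le

theorem isGreatest_range_Fobj {R_A R_P ρ T : ℝ} {k a : ℝ → ℝ}
    (hRA : 0 < R_A) (hRP : 0 < R_P) (hρ : 0 < ρ) (ha : IntervalIntegrable a volume 0 T)
    (hka : IntervalIntegrable (fun s => k (a s)) volume 0 T) (z γ αP αA : ℝ) :
    IsGreatest (range fun δ => Fobj R_A R_P ρ T k a z γ δ αP αA)
      (Gobj R_A R_P ρ T k a z γ αP αA) := by
  set u := -(1 - z) * (∫ s in (0:ℝ)..T, a s) + (R_P * (1 - z) ^ 2 / 2 + γ / 2) * αP * T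
  set v := (∫ s in (0:ℝ)..T, k (a s)) - z * (∫ s in (0:ℝ)..T, a s)
    + (R_A * z ^ 2 / 2 - γ / 2) * αA * T
  have hF : ∀ δ, Fobj R_A R_P ρ T k a z γ δ αP αA
      = -(exp (R_P * (δ + u)) + ρ * exp (R_A * (v - δ))) := by
    intro δ
    rw [Fobj, neg_add']
    congr 4 <;> ring
  have hG : Gobj R_A R_P ρ T k a z γ αP αA
      = -(ρ ^ (R_P / (R_A + R_P)) * ((R_A + R_P) / R_P) * (R_A / R_P) ^ (-(R_A / (R_A + R_P)))
        * exp (R_A * R_P / (R_A + R_P) * (u + v))) := by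
    rw [Gobj, intervalIntegral.integral_sub hka ha]
    congr 4
    ring
  obtain ⟨⟨δ₀, hδ₀⟩, hle⟩ := isLeast_range_exp_add_mul_exp hRP hRA hρ u v
  refine ⟨⟨δ₀, by simp only [hF, hG, hδ₀]⟩, ?_⟩
  rintro _ ⟨δ, rfl⟩
  dsimp only
  rw [hF, hG, neg_le_neg_iff]
  exact hle ⟨δ, rfl⟩

theorem Gobj_neg_mul_one_sub_sq (R_A R_P ρ T : ℝ) (k a : ℝ → ℝ) (z αP α : ℝ) :
    Gobj R_A R_P ρ T k a z (-(R_P * (1 - z) ^ 2)) αP α = Gobj R_A R_P ρ T k a z 0 α α := by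
  simp only [Gobj]
  ring_nf

theorem Gobj_le_Gobj_const {R_A R_P ρ T α astar : ℝ} {k a : ℝ → ℝ}
    (hRA : 0 < R_A) (hRP : 0 < R_P) (hρ : 0 ≤ ρ) (hT : 0 ≤ T) (hα : 0 ≤ α)
    (hint : IntervalIntegrable (fun s => k (a s) - a s) volume 0 T)
    (hmin : ∀ s ∈ Icc 0 T, k astar - astar ≤ k (a s) - a s) (z : ℝ) :
    Gobj R_A R_P ρ T k a z 0 α α
      ≤ Gobj R_A R_P ρ T k (fun _ => astar) (R_P / (R_A + R_P)) 0 α α := by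
  have hintegral : ∫ _ in (0:ℝ)..T, (k astar - astar) ≤ ∫ s in (0:ℝ)..T, (k (a s) - a s) :=
    intervalIntegral.integral_mono_on hT intervalIntegrable_const hint hmin
  have hquad : R_P * (1 - R_P / (R_A + R_P)) ^ 2 + R_A * (R_P / (R_A + R_P)) ^ 2
      ≤ R_P * (1 - z) ^ 2 + R_A * z ^ 2 := by
    have hqp : 0 < R_A + R_P := by linarith
    have hgap : R_P * (1 - z) ^ 2 + R_A * z ^ 2
        - (R_P * (1 - R_P / (R_A + R_P)) ^ 2 + R_A * (R_P / (R_A + R_P)) ^ 2)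
        = (R_A + R_P) * (z - R_P / (R_A + R_P)) ^ 2 := by
      field_simp
      ring
    linarith [mul_nonneg hqp.le (sq_nonneg (z - R_P / (R_A + R_P)))]
  simp only [Gobj, neg_le_neg_iff]
  gcongr _ * exp (_ * (?_ + _ + T / 2 * ?_))
  linarith [mul_le_mul_of_nonneg_left hquad hα]

theorem IsAction.intervalIntegrable_comp {T aMax : ℝ} {a f : ℝ → ℝ} (ha : IsAction T aMax a)
    (hT : 0 ≤ T) (hf : Continuous f) : IntervalIntegrable (fun s => f (a s)) volume 0 T := by
  obtain ⟨C, hC⟩ := isCompact_Icc.exists_bound_of_continuousOn (hf.continuousOn (s := Icc 0 aMax))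
  rw [intervalIntegrable_iff, uIoc_of_le hT]
  refine Measure.integrableOn_of_bounded (M := C) measure_Ioc_lt_top.ne
    (hf.measurable.comp ha.1).aestronglyMeasurable ?_
  rw [ae_restrict_iff' measurableSet_Ioc]
  exact ae_of_all _ fun s hs => hC _ (ha.2 s (Ioc_subset_Icc_self hs))

theorem sup_Q_diag_general (R_A R_P ρ T aMax : ℝ) (k : ℝ → ℝ)
    (hRA : 0 < R_A) (hRP : 0 < R_P) (hρ : 0 < ρ) (hT : 0 < T)
    (hkcont : Continuous k)
    (astar : ℝ) (hastar_mem : astar ∈ Set.Icc (0 : ℝ) aMax)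
    (hastar_min : ∀ x ∈ Set.Icc (0 : ℝ) aMax, k astar - astar ≤ k x - x)
    (αAhigh : ℝ) (hαA : 0 < αAhigh) (αP : ℝ) :
    IsGreatest {x : ℝ | ∃ a z δ, IsAction T aMax a ∧
        x = Fobj R_A R_P ρ T k a z (-(R_P * (1 - z) ^ 2)) δ αP αAhigh}
      (Gobj R_A R_P ρ T k (fun _ => astar) (R_P / (R_A + R_P)) 0 αAhigh αAhigh) ∧
    (∃ δ : ℝ, Fobj R_A R_P ρ T k (fun _ => astar) (R_P / (R_A + R_P))
        (-(R_P * (1 - R_P / (R_A + R_P)) ^ 2)) δ αP αAhigh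
      = Gobj R_A R_P ρ T k (fun _ => astar) (R_P / (R_A + R_P)) 0 αAhigh αAhigh) := by
  obtain ⟨δ₀, hδ₀⟩ := (isGreatest_range_Fobj hRA hRP hρ intervalIntegrable_const
    intervalIntegrable_const (R_P / (R_A + R_P)) _ αP αAhigh).1
  rw [Gobj_neg_mul_one_sub_sq] at hδ₀
  refine ⟨⟨⟨_, _, δ₀, ⟨measurable_const, fun _ _ => hastar_mem⟩, hδ₀.symm⟩, ?_⟩, δ₀, hδ₀⟩
  rintro _ ⟨a, z, δ, ha, rfl⟩
  have hia : IntervalIntegrable a volume 0 T := ha.intervalIntegrable_comp hT.le continuous_id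
  have hika := ha.intervalIntegrable_comp hT.le hkcont
  calc Fobj R_A R_P ρ T k a z (-(R_P * (1 - z) ^ 2)) δ αP αAhigh
      ≤ Gobj R_A R_P ρ T k a z (-(R_P * (1 - z) ^ 2)) αP αAhigh :=
        (isGreatest_range_Fobj hRA hRP hρ hia hika _ _ _ _).2 ⟨δ, rfl⟩
    _ = Gobj R_A R_P ρ T k a z 0 αAhigh αAhigh := Gobj_neg_mul_one_sub_sq ..
    _ ≤ _ := Gobj_le_Gobj_const hRA hRP hρ.le hT.le hαA.le (hika.sub hia)
        (fun s hs => hastar_min _ (ha.2 s hs)) z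

/-- Lemma 3.3(ii): for any `α_P > 0`, the supremum of `F(a,z,-R_P(1-z)²,δ,α_P,α_A^high)`
over deterministic actions, `z` and `δ`, equals `G(a*,z*,α_A^high)`; in particular it
does not depend on `α_P`, and it is attained at `a = a*`, `z = z*`. -/
theorem sup_Q_diag (R_A R_P ρ T aMax : ℝ) (k : ℝ → ℝ)
    (hRA : 0 < R_A) (hRP : 0 < R_P) (hρ : 0 < ρ) (hT : 0 < T) (haMax : 0 < aMax)
    (hkcont : Continuous k) (hkconv : StrictConvexOn ℝ Set.univ k) (hkmono : StrictMono k)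
    (astar : ℝ) (hastar_mem : astar ∈ Set.Icc (0 : ℝ) aMax)
    (hastar_min : ∀ x ∈ Set.Icc (0 : ℝ) aMax, k astar - astar ≤ k x - x)
    (αAhigh : ℝ) (hαA : 0 < αAhigh) (αP : ℝ) (hαP : 0 < αP) :
    IsGreatest {x : ℝ | ∃ a z δ, IsAction T aMax a ∧
        x = Fobj R_A R_P ρ T k a z (-(R_P * (1 - z) ^ 2)) δ αP αAhigh}
      (Gobj R_A R_P ρ T k (fun _ => astar) (R_P / (R_A + R_P)) 0 αAhigh αAhigh) ∧
    (∃ δ : ℝ, Fobj R_A R_P ρ T k (fun _ => astar) (R_P / (R_A + R_P))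
        (-(R_P * (1 - R_P / (R_A + R_P)) ^ 2)) δ αP αAhigh
      = Gobj R_A R_P ρ T k (fun _ => astar) (R_P / (R_A + R_P)) 0 αAhigh αAhigh) :=
  sup_Q_diag_general R_A R_P ρ T aMax k hRA hRP hρ hT hkcont astar hastar_mem hastar_min αAhigh hαA
    αP
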